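/- Let G = (V,E) be a finite simple graph with an ordering of its edges, and let S ⊆ V. Then F_V(x) = Σ_{F ∈ 𝓕_{G,S}} x^{|F|} · F_{V − S − V(F)}(x), where the sum is over all broken-circuit-free forests F of G each of whose non-trivial components contains at least one vertex of S. -/

import Mathlib

open Finset

attribute [local instance] Classical.propDecidable

variable {V : Type} [Fintype V] [DecidableEq V]

/-- Vertex support of an edge set: the non-isolated vertices `V(F)`. -/
def edgeSupp (F : Finset (Sym2 V)) : Finset V :=
  Finset.univ.filter fun v => ∃ e ∈ F, v ∈ e

/-- The induced subgraph `G[U]`, viewed as a graph on the same vertex type. -/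
def inducedOn (G : SimpleGraph V) (U : Finset V) : SimpleGraph V where
  Adj a b := G.Adj a b ∧ a ∈ U ∧ b ∈ U
  symm := ⟨fun a b ⟨h, ha, hb⟩ => ⟨h.symm, hb, ha⟩⟩
  loopless := ⟨fun a ⟨h, _, _⟩ => G.loopless.irrefl a h⟩

/-- `C` is the edge set of a cycle of `G`. -/
def IsCircuit (G : SimpleGraph V) (C : Finset (Sym2 V)) : Prop :=
  ∃ (v : V) (w : G.Walk v v), w.IsCycle ∧ C = w.edges.toFinset

/-- `B` is a broken circuit of `G` w.r.t. the edge ordering `ord`. -/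
def IsBrokenCircuit (G : SimpleGraph V) (ord : Sym2 V → ℕ) (B : Finset (Sym2 V)) : Prop :=
  ∃ C, IsCircuit G C ∧ ∃ e ∈ C, (∀ f ∈ C, ord f ≤ ord e) ∧ B = C.erase e

/-- `F` is a broken-circuit-free set of edges of `G`. -/
def IsBCF (G : SimpleGraph V) (ord : Sym2 V → ℕ) (F : Finset (Sym2 V)) : Prop :=
  F ⊆ G.edgeFinset ∧ ∀ B, IsBrokenCircuit G ord B → ¬ B ⊆ F

/-- The BCF generating function `F_U(x)` of the induced subgraph `G[U]`. -/
noncomputable def bcfSumOn (G : SimpleGraph V) (U : Finset V) (ord : Sym2 V → ℕ)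
    (x : ℝ) : ℝ :=
  ∑ F ∈ (inducedOn G U).edgeFinset.powerset.filter (IsBCF (inducedOn G U) ord),
    x ^ F.card

/-!
A BCF set `H` of `G` splits as `F ∪ F'`, where `F` consists of the edges of the components of
`(V, H)` that meet `S`. The edges of `F'` avoid `S` and `V(F)`, so `F'` is a BCF set of
`G[V - S - V(F)]`. Conversely, for such `F` and any BCF set `F'` of `G[V - S - V(F)]` the union
`F ∪ F'` is BCF in `G`: a broken circuit is a path, so it cannot pass between the vertex-disjoint
`F` and `F'`, and when it lies in `F'` the edge closing its circuit lies in `G[V - S - V(F)]` too.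
Hence `H ↦ (F, F')` is a bijection with `|H| = |F| + |F'|`.
-/

section

omit [Fintype V] [DecidableEq V]

lemma inducedOn_le (G : SimpleGraph V) (U : Finset V) : inducedOn G U ≤ G :=
  fun _ _ h => h.1

lemma mem_edgeSet_inducedOn {G : SimpleGraph V} {U : Finset V} {e : Sym2 V} :
    e ∈ (inducedOn G U).edgeSet ↔ e ∈ G.edgeSet ∧ ∀ v ∈ e, v ∈ U := by
  induction e using Sym2.ind with
  | _ x y => simp [inducedOn]

lemma reachable_fromEdgeSet_of_mem {H : Set (Sym2 V)} {e : Sym2 V} (he : e ∈ H) {a b : V}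
    (ha : a ∈ e) (hb : b ∈ e) : (SimpleGraph.fromEdgeSet H).Reachable a b := by
  induction e using Sym2.ind with
  | _ x y =>
    by_cases hxy : x = y
    · subst hxy
      rw [Sym2.mem_iff, or_self] at ha hb
      exact ha ▸ hb ▸ .rfl
    have hadj : (SimpleGraph.fromEdgeSet H).Adj x y :=
      (SimpleGraph.fromEdgeSet_adj _).2 ⟨he, hxy⟩
    rcases Sym2.mem_iff.1 ha with rfl | rfl <;> rcases Sym2.mem_iff.1 hb with rfl | rfl
    exacts [.rfl, hadj.reachable, hadj.symm.reachable, .rfl]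

lemma mem_of_mem_edges_fromEdgeSet {H : Set (Sym2 V)} {u v : V}
    (p : (SimpleGraph.fromEdgeSet H).Walk u v) {e : Sym2 V} (he : e ∈ p.edges) : e ∈ H := by
  have h := p.edges_subset_edgeSet he
  rw [SimpleGraph.edgeSet_fromEdgeSet] at h
  exact h.1

namespace SimpleGraph.Walk

variable {G : SimpleGraph V}

lemma iff_of_mem_support {P : V → Prop} {u v : V} (p : G.Walk u v)
    (hP : ∀ ⦃x y : V⦄, s(x, y) ∈ p.edges → (P x ↔ P y)) : ∀ w ∈ p.support, P w ↔ P u := by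
  induction p with
  | nil => simp
  | cons h p ih =>
    intro w hw
    rw [support_cons, List.mem_cons] at hw
    rcases hw with rfl | hw
    · rfl
    · exact (ih (fun x y hxy => hP (by simp [hxy])) w hw).trans (hP (by simp)).symm

lemma exists_split_of_mem_darts {u v : V} (p : G.Walk u v) {d : G.Dart} (hd : d ∈ p.darts) :
    ∃ (p₁ : G.Walk u d.fst) (p₂ : G.Walk d.snd v), p.edges = p₁.edges ++ d.edge :: p₂.edges := by
  induction p with
  | nil => simp at hd
  | cons h p ih =>
    rw [darts_cons, List.mem_cons] at hd
    rcases hd with rfl | hd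
    · exact ⟨nil, p, by simp [Dart.edge]⟩
    · obtain ⟨p₁, p₂, hE⟩ := ih hd
      exact ⟨cons h p₁, p₂, by simp [hE]⟩

end SimpleGraph.Walk

def ReachesSet (H : Finset (Sym2 V)) (S : Finset V) (v : V) : Prop :=
  ∃ s ∈ S, (SimpleGraph.fromEdgeSet (H : Set (Sym2 V))).Reachable v s

lemma ReachesSet.mono {H H' : Finset (Sym2 V)} (hH : H ⊆ H') {S : Finset V} {v : V}
    (h : ReachesSet H S v) : ReachesSet H' S v := by
  obtain ⟨s, hs, hr⟩ := h
  exact ⟨s, hs, hr.mono (SimpleGraph.fromEdgeSet_mono (coe_subset.2 hH))⟩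

lemma ReachesSet.of_mem_edge {H : Finset (Sym2 V)} {S : Finset V} {e : Sym2 V} (he : e ∈ H)
    {a b : V} (ha : a ∈ e) (hb : b ∈ e) (h : ReachesSet H S b) : ReachesSet H S a := by
  obtain ⟨s, hs, hr⟩ := h
  exact ⟨s, hs, (reachable_fromEdgeSet_of_mem (mem_coe.2 he) ha hb).trans hr⟩

end

section

omit [DecidableEq V]

lemma inducedOn_univ (G : SimpleGraph V) : inducedOn G univ = G := by
  ext a b; simp [inducedOn]

lemma mem_edgeFinset_inducedOn {G : SimpleGraph V} {U : Finset V} {e : Sym2 V} :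
    e ∈ (inducedOn G U).edgeFinset ↔ e ∈ G.edgeFinset ∧ ∀ v ∈ e, v ∈ U := by
  simp only [SimpleGraph.mem_edgeFinset, mem_edgeSet_inducedOn]

end

section

omit [Fintype V]

lemma IsCircuit.subset_edgeSet {G : SimpleGraph V} {C : Finset (Sym2 V)} (h : IsCircuit G C) :
    ∀ e ∈ C, e ∈ G.edgeSet := by
  obtain ⟨v, w, -, rfl⟩ := h
  exact fun e he => w.edges_subset_edgeSet (List.mem_toFinset.1 he)

lemma IsCircuit.transfer {G G' : SimpleGraph V} {C : Finset (Sym2 V)} (h : IsCircuit G C)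
    (hC : ∀ e ∈ C, e ∈ G'.edgeSet) : IsCircuit G' C := by
  obtain ⟨v, w, hw, rfl⟩ := h
  have hw' : ∀ e ∈ w.edges, e ∈ G'.edgeSet := fun e he => hC e (List.mem_toFinset.2 he)
  exact ⟨v, w.transfer G' hw', hw.transfer hw', by rw [SimpleGraph.Walk.edges_transfer]⟩

lemma IsCircuit.exists_walk_erase {G : SimpleGraph V} {C : Finset (Sym2 V)} (h : IsCircuit G C)
    {e : Sym2 V} (he : e ∈ C) :
    ∃ (a b : V) (q : G.Walk b a), e = s(a, b) ∧ q.edges.toFinset = C.erase e := by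
  obtain ⟨v, w, hw, rfl⟩ := h
  obtain ⟨d, hd, rfl⟩ : ∃ d ∈ w.darts, d.edge = e := List.mem_map.1 (List.mem_toFinset.1 he)
  obtain ⟨p₁, p₂, hE⟩ := w.exists_split_of_mem_darts hd
  have hnd := hw.isCircuit.isTrail.edges_nodup
  rw [hE, List.nodup_append, List.nodup_cons] at hnd
  obtain ⟨-, ⟨h₂, -⟩, hdisj⟩ := hnd
  have h₁ : d.edge ∉ p₁.edges := fun hx => hdisj _ hx _ List.mem_cons_self rfl
  refine ⟨d.fst, d.snd, p₂.append p₁, rfl, ?_⟩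
  ext f
  simp only [List.mem_toFinset, SimpleGraph.Walk.edges_append, List.mem_append, mem_erase, hE,
    List.mem_cons]
  constructor
  · rintro (hf | hf)
    · exact ⟨fun hfe => h₂ (hfe ▸ hf), .inr (.inr hf)⟩
    · exact ⟨fun hfe => h₁ (hfe ▸ hf), .inl hf⟩
  · rintro ⟨hne, hf | hf | hf⟩
    exacts [.inr hf, absurd hf hne, .inl hf]

lemma IsBrokenCircuit.of_le {G G' : SimpleGraph V} (hle : G ≤ G') {ord : Sym2 V → ℕ}
    {B : Finset (Sym2 V)} (h : IsBrokenCircuit G ord B) : IsBrokenCircuit G' ord B := by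
  obtain ⟨C, hC, e, he, hmax, rfl⟩ := h
  exact ⟨C, hC.transfer fun f hf => SimpleGraph.edgeSet_mono hle (hC.subset_edgeSet f hf),
    e, he, hmax, rfl⟩

end

lemma mem_edgeSupp {F : Finset (Sym2 V)} {v : V} : v ∈ edgeSupp F ↔ ∃ e ∈ F, v ∈ e := by
  simp [edgeSupp]

lemma mem_edgeSupp_of_mem {F : Finset (Sym2 V)} {e : Sym2 V} {v : V} (he : e ∈ F) (hv : v ∈ e) :
    v ∈ edgeSupp F :=
  mem_edgeSupp.2 ⟨e, he, hv⟩

lemma IsBCF.of_le {G G' : SimpleGraph V} (hle : G ≤ G') {ord : Sym2 V → ℕ}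
    {F : Finset (Sym2 V)} (h : IsBCF G' ord F) (hF : F ⊆ G.edgeFinset) : IsBCF G ord F :=
  ⟨hF, fun B hB => h.2 B (hB.of_le hle)⟩

lemma IsBCF.mono {G : SimpleGraph V} {ord : Sym2 V → ℕ} {F H : Finset (Sym2 V)}
    (h : IsBCF G ord H) (hFH : F ⊆ H) : IsBCF G ord F :=
  ⟨hFH.trans h.1, fun B hB hBF => h.2 B hB (hBF.trans hFH)⟩

/-- The edges of the components of `(V, H)` that meet `S`. -/
noncomputable def edgesMeeting (S : Finset V) (H : Finset (Sym2 V)) : Finset (Sym2 V) :=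
  H.filter fun e => ∃ a ∈ e, ReachesSet H S a

lemma edgesMeeting_subset (S : Finset V) (H : Finset (Sym2 V)) : edgesMeeting S H ⊆ H :=
  filter_subset _ _

lemma reachesSet_of_mem_edgeSupp_edgesMeeting {H : Finset (Sym2 V)} {S : Finset V} {v : V}
    (hv : v ∈ edgeSupp (edgesMeeting S H)) : ReachesSet H S v := by
  obtain ⟨e, he, hve⟩ := mem_edgeSupp.1 hv
  obtain ⟨heH, a, hae, ha⟩ := mem_filter.1 he
  exact ha.of_mem_edge heH hve hae

/-- Every edge on a path from `v` to `S` lies in a component meeting `S`. -/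
lemma ReachesSet.restrict_edgesMeeting {H : Finset (Sym2 V)} {S : Finset V} {v : V}
    (h : ReachesSet H S v) : ReachesSet (edgesMeeting S H) S v := by
  obtain ⟨s, hs, ⟨p⟩⟩ := h
  have hp : ∀ e ∈ p.edges, e ∈ (SimpleGraph.fromEdgeSet ↑(edgesMeeting S H)).edgeSet := by
    intro e he
    have he' := p.edges_subset_edgeSet he
    rw [SimpleGraph.edgeSet_fromEdgeSet] at he' ⊢
    refine ⟨mem_filter.2 ⟨he'.1, ?_⟩, he'.2⟩
    induction e using Sym2.ind with
    | _ x y =>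
      exact ⟨x, Sym2.mem_mk_left x y, s, hs,
        ⟨p.dropUntil x (p.fst_mem_support_of_mem_edges he)⟩⟩
  exact ⟨s, hs, ⟨p.transfer _ hp⟩⟩

lemma sdiff_edgesMeeting_subset {G : SimpleGraph V} {S : Finset V} {H : Finset (Sym2 V)}
    (hH : H ⊆ G.edgeFinset) :
    H \ edgesMeeting S H ⊆ (inducedOn G ((univ \ S) \ edgeSupp (edgesMeeting S H))).edgeFinset := by
  intro e he
  obtain ⟨heH, he⟩ := mem_sdiff.1 he
  have hfar : ∀ a ∈ e, ¬ ReachesSet H S a := fun a hae ha => he (mem_filter.2 ⟨heH, a, hae, ha⟩)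
  refine mem_edgeFinset_inducedOn.2 ⟨hH heH, fun v hv => ?_⟩
  simp only [mem_sdiff, mem_univ, true_and]
  exact ⟨fun hvS => hfar v hv ⟨v, hvS, .rfl⟩,
    fun hv' => hfar v hv (reachesSet_of_mem_edgeSupp_edgesMeeting hv')⟩

section Split

variable {G : SimpleGraph V} {U : Finset V} {F F' : Finset (Sym2 V)}

lemma mem_iff_mem_of_mem_union (hF' : F' ⊆ (inducedOn G U).edgeFinset)
    (hFU : Disjoint (edgeSupp F) U) {e : Sym2 V} (he : e ∈ F ∪ F') {a b : V} (ha : a ∈ e)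
    (hb : b ∈ e) : a ∈ U ↔ b ∈ U := by
  rcases mem_union.1 he with he | he
  · exact iff_of_false (disjoint_left.1 hFU (mem_edgeSupp_of_mem he ha))
      (disjoint_left.1 hFU (mem_edgeSupp_of_mem he hb))
  · have h := (mem_edgeFinset_inducedOn.1 (hF' he)).2
    exact iff_of_true (h a ha) (h b hb)

lemma disjoint_of_subset_edgeFinset_inducedOn (hF' : F' ⊆ (inducedOn G U).edgeFinset)
    (hFU : Disjoint (edgeSupp F) U) : Disjoint F F' := by
  refine disjoint_left.2 fun e he he' => ?_
  induction e using Sym2.ind with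
  | _ x y =>
    exact disjoint_left.1 hFU (mem_edgeSupp_of_mem he (Sym2.mem_mk_left x y))
      ((mem_edgeFinset_inducedOn.1 (hF' he')).2 x (Sym2.mem_mk_left x y))

lemma edgesMeeting_union {S : Finset V} (hF : ∀ a ∈ edgeSupp F, ReachesSet F S a)
    (hF' : F' ⊆ (inducedOn G U).edgeFinset) (hFU : Disjoint (edgeSupp F) U)
    (hSU : Disjoint S U) : edgesMeeting S (F ∪ F') = F := by
  refine Subset.antisymm (fun e he => ?_) (fun e he => ?_)
  · obtain ⟨heU, a, hae, s, hs, ⟨p⟩⟩ := mem_filter.1 he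
    by_contra heF
    have haU : a ∈ U :=
      (mem_edgeFinset_inducedOn.1 (hF' ((mem_union.1 heU).resolve_left heF))).2 a hae
    have hsU : s ∈ U := (p.iff_of_mem_support (P := (· ∈ U)) (fun x y hxy =>
      mem_iff_mem_of_mem_union hF' hFU (mem_of_mem_edges_fromEdgeSet p hxy)
        (Sym2.mem_mk_left x y) (Sym2.mem_mk_right x y)) s p.end_mem_support).2 haU
    exact disjoint_left.1 hSU hs hsU
  · induction e using Sym2.ind with
    | _ x y =>
      exact mem_filter.2 ⟨mem_union_left _ he, x, Sym2.mem_mk_left x y,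
        (hF x (mem_edgeSupp_of_mem he (Sym2.mem_mk_left x y))).mono subset_union_left⟩

/-- A broken circuit inside `F ∪ F'` is a path, so it cannot cross between `U` and its
complement: it lies in `F`, or it lies in `F'` and its circuit is one of `G[U]`. -/
lemma isBCF_union {ord : Sym2 V → ℕ} (hF : IsBCF G ord F) (hF' : IsBCF (inducedOn G U) ord F')
    (hFU : Disjoint (edgeSupp F) U) : IsBCF G ord (F ∪ F') := by
  refine ⟨union_subset hF.1 (hF'.1.trans (SimpleGraph.edgeFinset_mono (inducedOn_le G U))), ?_⟩
  rintro _ ⟨C, hC, e, heC, hmax, rfl⟩ hB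
  obtain ⟨a, b, q, rfl, hq⟩ := hC.exists_walk_erase heC
  have hqB : ∀ f ∈ q.edges, f ∈ F ∪ F' := fun f hf => hB (hq ▸ List.mem_toFinset.2 hf)
  have hside : ∀ w ∈ q.support, w ∈ U ↔ b ∈ U := q.iff_of_mem_support fun x y hxy =>
    mem_iff_mem_of_mem_union hF'.1 hFU (hqB _ hxy) (Sym2.mem_mk_left x y) (Sym2.mem_mk_right x y)
  have hF'_iff : ∀ f ∈ q.edges, f ∈ F' ↔ b ∈ U := by
    intro f hf
    induction f using Sym2.ind with
    | _ x y =>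
      have hx := hside x (q.fst_mem_support_of_mem_edges hf)
      rcases mem_union.1 (hqB _ hf) with hfF | hfF'
      · exact iff_of_false
          (disjoint_left.1 (disjoint_of_subset_edgeFinset_inducedOn hF'.1 hFU) hfF)
          (hx.not.1 (disjoint_left.1 hFU (mem_edgeSupp_of_mem hfF (Sym2.mem_mk_left x y))))
      · exact iff_of_true hfF' (hx.1 ((mem_edgeFinset_inducedOn.1 (hF'.1 hfF')).2 x
          (Sym2.mem_mk_left x y)))
  by_cases hb : b ∈ U
  · have hBF' : C.erase s(a, b) ⊆ F' := fun f hf =>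
      (hF'_iff f (List.mem_toFinset.1 (hq ▸ hf))).2 hb
    have haU : a ∈ U := (hside a q.end_mem_support).2 hb
    have hCU : IsCircuit (inducedOn G U) C := hC.transfer fun f hf => by
      by_cases hfe : f = s(a, b)
      · subst hfe
        exact mem_edgeSet_inducedOn.2 ⟨hC.subset_edgeSet _ hf, by simp [haU, hb]⟩
      · exact SimpleGraph.mem_edgeFinset.1 (hF'.1 (hBF' (mem_erase.2 ⟨hfe, hf⟩)))
    exact hF'.2 _ ⟨C, hCU, _, heC, hmax, rfl⟩ hBF'
  · have hBF : C.erase s(a, b) ⊆ F := fun f hf =>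
      (mem_union.1 (hB hf)).resolve_right
        ((hF'_iff f (List.mem_toFinset.1 (hq ▸ hf))).not.2 hb)
    exact hF.2 _ ⟨C, hC, _, heC, hmax, rfl⟩ hBF

end Split

lemma mem_filter_isBCF {G : SimpleGraph V} {ord : Sym2 V → ℕ} {F : Finset (Sym2 V)} :
    F ∈ G.edgeFinset.powerset.filter (IsBCF G ord) ↔ IsBCF G ord F := by
  simpa using fun h : IsBCF G ord F => h.1

lemma mem_filter_isBCF_and {G : SimpleGraph V} {ord : Sym2 V → ℕ} {P : Finset (Sym2 V) → Prop}
    [DecidablePred fun F => IsBCF G ord F ∧ P F] {F : Finset (Sym2 V)} :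
    F ∈ G.edgeFinset.powerset.filter (fun F => IsBCF G ord F ∧ P F) ↔ IsBCF G ord F ∧ P F := by
  simpa using fun (h : IsBCF G ord F) _ => h.1

theorem bcf_recursion_general (G : SimpleGraph V) (ord : Sym2 V → ℕ)
    (S : Finset V) (x : ℝ) :
    bcfSumOn G Finset.univ ord x =
      ∑ F ∈ G.edgeFinset.powerset.filter (fun F => IsBCF G ord F ∧
          ∀ a ∈ edgeSupp F, ∃ s ∈ S,
            (SimpleGraph.fromEdgeSet (↑F : Set (Sym2 V))).Reachable a s),
        x ^ F.card * bcfSumOn G ((Finset.univ \ S) \ edgeSupp F) ord x := by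
  unfold bcfSumOn
  rw [inducedOn_univ]
  simp only [mul_sum, ← pow_add]
  rw [sum_sigma']
  refine sum_nbij' (fun H => ⟨edgesMeeting S H, H \ edgesMeeting S H⟩) (fun p => p.1 ∪ p.2)
    (fun H hH => ?_) (fun ⟨F, F'⟩ hp => ?_)
    (fun H _ => union_sdiff_of_subset (edgesMeeting_subset S H)) (fun ⟨F, F'⟩ hp => ?_)
    (fun H _ => ?_)
  · simp only [mem_filter_isBCF, mem_sigma, mem_filter_isBCF_and] at hH ⊢
    exact ⟨⟨hH.mono (edgesMeeting_subset S H), fun a ha =>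
        (reachesSet_of_mem_edgeSupp_edgesMeeting ha).restrict_edgesMeeting⟩,
      (hH.mono sdiff_subset).of_le (inducedOn_le _ _) (sdiff_edgesMeeting_subset hH.1)⟩
  · simp only [mem_filter_isBCF, mem_sigma, mem_filter_isBCF_and] at hp ⊢
    exact isBCF_union hp.1.1 hp.2 disjoint_sdiff
  · simp only [mem_filter_isBCF, mem_sigma, mem_filter_isBCF_and] at hp
    have hF' := hp.2.1
    rw [edgesMeeting_union hp.1.2 hF' disjoint_sdiff (disjoint_sdiff.mono_right sdiff_subset),
      union_sdiff_cancel_left (disjoint_of_subset_edgeFinset_inducedOn hF' disjoint_sdiff)]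
  · rw [← card_union_of_disjoint disjoint_sdiff, union_sdiff_of_subset (edgesMeeting_subset S H)]

/-- Identity (3.7): `F_V(x) = Σ_{F ∈ 𝓕_{G,S}} x^{|F|} F_{V − S − V(F)}(x)`, where the sum
is over BCF forests `F` of `G` each of whose non-trivial components meets `S`. -/
theorem bcf_recursion (G : SimpleGraph V) (ord : Sym2 V → ℕ)
    (hord : Set.InjOn ord G.edgeSet) (S : Finset V) (x : ℝ) :
    bcfSumOn G Finset.univ ord x =
      ∑ F ∈ G.edgeFinset.powerset.filter (fun F => IsBCF G ord F ∧
          ∀ a ∈ edgeSupp F, ∃ s ∈ S,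
            (SimpleGraph.fromEdgeSet (↑F : Set (Sym2 V))).Reachable a s),
        x ^ F.card * bcfSumOn G ((Finset.univ \ S) \ edgeSupp F) ord x :=
  bcf_recursion_general G ord S x
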